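/- Let P be an n×n correlation with strictly positive entries and let 0 ≤ λ < 1. If there exist a dimension d and a state σ generating P with local dimension d under depolarizing noise of strength λ, then for every permutation φ of {1,…,n}: λ ≤ 1 − ∑_{x=1}^n √( max{ 0, (∑_{b=1}^n P(x,b))·(∑_{a=1}^n P(a,φ(x))) − P(x,φ(x)) } ). -/

import Mathlib

/-! Let `Q(x,y) = tr((E_x ⊗ F_y) σ)` be the noiseless correlation, with marginals `a` and `b`.
Depolarizing the effects turns `P` into the classical mixture in which each party keeps its
outcome with probability `1 - λ` and otherwise outputs `x` with probability `e_x = tr E_x / d`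
(resp. `f_y`). For such a mixture, with `R` and `C` the row and column sums of `P`,
`R_x C_y - P(x,y) = (1 - λ)² (a_x b_y - Q(x,y)) ≤ (1 - λ)² a_x b_y`, so by AM-GM the `x`-th square
root is at most `(1 - λ) (a_x + b_{φ x}) / 2`, and these bounds sum to `1 - λ`. -/

open Matrix BigOperators Finset
open scoped Kronecker ComplexOrder

noncomputable section

/-- The effect of the depolarizing channel on a measurement effect (Heisenberg picture). -/
def noisyEffect {d : ℕ} (lam : ℝ) (E : Matrix (Fin d) (Fin d) ℂ) : Matrix (Fin d) (Fin d) ℂ :=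
  ((1 - lam : ℝ) : ℂ) • E + ((lam : ℂ) * E.trace / (d : ℂ)) • (1 : Matrix (Fin d) (Fin d) ℂ)

/-- A POVM on ℂ^d with n outcomes. -/
def IsPOVM {d n : ℕ} (E : Fin n → Matrix (Fin d) (Fin d) ℂ) : Prop :=
  (∀ x, (E x).PosSemidef) ∧ ∑ x, E x = 1

/-- P is generated with local dimension d under depolarizing noise of strength lam. -/
def GeneratesWithNoise {n : ℕ} (P : Matrix (Fin n) (Fin n) ℝ) (lam : ℝ) (d : ℕ) : Prop :=
  ∃ (σ : Matrix (Fin d × Fin d) (Fin d × Fin d) ℂ)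
    (E F : Fin n → Matrix (Fin d) (Fin d) ℂ),
    σ.PosSemidef ∧ σ.trace = 1 ∧ IsPOVM E ∧ IsPOVM F ∧
    ∀ x y, (P x y : ℂ) =
      ((noisyEffect lam (E x) ⊗ₖ noisyEffect lam (F y)) * σ).trace

/-- The matrix P̂_λ^{s,t}. -/
def Phat {n : ℕ} (P : Matrix (Fin n) (Fin n) ℝ) (lam : ℝ) (s t : Fin n → ℝ)
    (x y : Fin n) : ℝ :=
  P x y - lam * s x * (∑ a, P a y) - lam * t y * (∑ b, P x b) + lam ^ 2 * s x * t y

/-- Nonnegative rank. -/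
def NonnegRank {m n : ℕ} (P : Matrix (Fin m) (Fin n) ℝ) : ℕ :=
  sInf {r : ℕ | ∃ (u : Fin r → Fin m → ℝ) (v : Fin r → Fin n → ℝ),
    (∀ i x, 0 ≤ u i x) ∧ (∀ i y, 0 ≤ v i y) ∧ ∀ x y, P x y = ∑ i, u i x * v i y}

/-- PSD rank. -/
def PsdRank {m n : ℕ} (M : Matrix (Fin m) (Fin n) ℝ) : ℕ :=
  sInf {r : ℕ | ∃ (C : Fin m → Matrix (Fin r) (Fin r) ℂ)
    (D : Fin n → Matrix (Fin r) (Fin r) ℂ),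
    (∀ x, (C x).PosSemidef) ∧ (∀ y, (D y).PosSemidef) ∧
    ∀ x y, (M x y : ℂ) = (C x * D y).trace}

def outerProj {α : Type*} [Fintype α] (ψ : α → ℂ) : Matrix α α ℂ :=
  Matrix.of fun i j => ψ i * (starRingEnd ℂ) (ψ j)

def qval (k : ℝ) : ℝ := 1 / (1 - k) - Real.sqrt (1 / (1 - k) ^ 2 - 1)

def Bmat (m : ℕ) (k : ℝ) : Matrix (Fin m) (Fin m) ℝ :=
  Matrix.of fun x y =>
    (1 / (m : ℝ) ^ 2) * (1 - k * Real.cos (2 * Real.pi * ((x.val : ℝ) + (y.val : ℝ)) / m))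

def Amat (m : ℕ) (k : ℝ) : Matrix (Fin (m + 1)) (Fin (m + 1)) ℝ :=
  Matrix.of fun x y =>
    if x.val = 0 then
      (if y.val = 0 then (1 - qval k) ^ 2 / 2 else qval k * (1 - qval k) / (2 * m))
    else if y.val = 0 then qval k * (1 - qval k) / (2 * m)
    else ((1 + (qval k) ^ 2) / 2) *
      ((1 / (m : ℝ) ^ 2) *
        (1 - k * Real.cos (2 * Real.pi * (((x.val : ℝ) - 1) + ((y.val : ℝ) - 1)) / m)))

def IsElPsdFactorization {n : ℕ} (P : Matrix (Fin n) (Fin n) ℝ) (lam : ℝ) (r : ℕ)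
    (C D : Fin n → Matrix (Fin r) (Fin r) ℂ) : Prop :=
  (∀ x, (C x).PosSemidef) ∧ (∀ y, (D y).PosSemidef) ∧
  (∀ x y, (P x y : ℂ) = (C x * D y).trace) ∧
  IsUnit (∑ k, C k) ∧ IsUnit (∑ k, D k) ∧
  (∀ x, (C x - (((lam : ℂ) / r) * (C x * (∑ k, C k)⁻¹).trace) • (∑ k, C k)).PosSemidef) ∧
  (∀ y, (D y - (((lam : ℂ) / r) * (D y * (∑ k, D k)⁻¹).trace) • (∑ k, D k)).PosSemidef)

namespace Matrix

theorem PosSemidef.trace_mul_nonneg {𝕜 ι : Type*} [RCLike 𝕜] [Fintype ι] [DecidableEq ι]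
    {A B : Matrix ι ι 𝕜} (hA : A.PosSemidef) (hB : B.PosSemidef) : 0 ≤ (A * B).trace := by
  obtain ⟨D, rfl⟩ : ∃ D : Matrix ι ι 𝕜, B = star D * D := by
    open scoped MatrixOrder in exact CStarAlgebra.nonneg_iff_eq_star_mul_self.mp hB.nonneg
  rw [← Matrix.mul_assoc, trace_mul_cycle, star_eq_conjTranspose]
  exact (hA.mul_mul_conjTranspose_same D).trace_nonneg

theorem kronecker_sum {α ι l m n p : Type*} [NonUnitalNonAssocSemiring α] (s : Finset ι)
    (A : Matrix l m α) (B : ι → Matrix n p α) :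
    A ⊗ₖ (∑ i ∈ s, B i) = ∑ i ∈ s, A ⊗ₖ B i := by
  ext ⟨i₁, i₂⟩ ⟨j₁, j₂⟩
  simp [sum_apply, Finset.mul_sum]

theorem sum_kronecker {α ι l m n p : Type*} [NonUnitalNonAssocSemiring α] (s : Finset ι)
    (A : ι → Matrix l m α) (B : Matrix n p α) :
    (∑ i ∈ s, A i) ⊗ₖ B = ∑ i ∈ s, A i ⊗ₖ B := by
  ext ⟨i₁, i₂⟩ ⟨j₁, j₂⟩
  simp [sum_apply, Finset.sum_mul]

end Matrix

theorem sqrt_max_zero_mul_sub_le {a b c : ℝ} (ha : 0 ≤ a) (hb : 0 ≤ b) (hc : 0 ≤ c) :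
    √(max 0 (a * b - c)) ≤ (a + b) / 2 :=
  Real.sqrt_le_iff.mpr ⟨by positivity,
    max_le (by positivity) (by nlinarith [sq_nonneg (a - b)])⟩

theorem sqrt_max_zero_sq_mul {c : ℝ} (hc : 0 ≤ c) (z : ℝ) :
    √(max 0 (c ^ 2 * z)) = c * √(max 0 z) := by
  have hmax : max 0 (c ^ 2 * z) = c ^ 2 * max 0 z := by
    rw [mul_max_of_nonneg _ _ (sq_nonneg c), mul_zero]
  rw [hmax, Real.sqrt_mul' _ (le_max_left _ _), Real.sqrt_sq hc]

section DepolarizedCorrelation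

variable {ι κ : Type*} [Fintype ι] [Fintype κ]

def depolarizedCorrelation (lam : ℝ) (Q : Matrix ι κ ℝ) (e : ι → ℝ) (f : κ → ℝ) :
    Matrix ι κ ℝ :=
  of fun x y => (1 - lam) ^ 2 * Q x y
    + (1 - lam) * lam * ((∑ b, Q x b) * f y + e x * ∑ a, Q a y) + lam ^ 2 * (e x * f y)

variable {lam : ℝ} {Q : Matrix ι κ ℝ} {e : ι → ℝ} {f : κ → ℝ}

theorem sum_depolarizedCorrelation_row (hQ : ∑ x, ∑ y, Q x y = 1) (hf : ∑ y, f y = 1)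
    (x : ι) :
    ∑ y, depolarizedCorrelation lam Q e f x y = (1 - lam) * ∑ y, Q x y + lam * e x := by
  simp only [depolarizedCorrelation, of_apply, Finset.sum_add_distrib, ← Finset.mul_sum, mul_add]
  rw [Finset.sum_comm, hQ, hf]
  ring

theorem sum_depolarizedCorrelation_col (hQ : ∑ x, ∑ y, Q x y = 1) (he : ∑ x, e x = 1)
    (y : κ) :
    ∑ x, depolarizedCorrelation lam Q e f x y = (1 - lam) * ∑ x, Q x y + lam * f y := by
  simp only [depolarizedCorrelation, of_apply, Finset.sum_add_distrib, ← Finset.mul_sum,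
    ← Finset.sum_mul, mul_add]
  rw [hQ, he]
  ring

theorem rowSum_mul_colSum_sub_depolarizedCorrelation (hQ : ∑ x, ∑ y, Q x y = 1)
    (he : ∑ x, e x = 1) (hf : ∑ y, f y = 1) (x : ι) (y : κ) :
    (∑ b, depolarizedCorrelation lam Q e f x b) * (∑ a, depolarizedCorrelation lam Q e f a y)
      - depolarizedCorrelation lam Q e f x y
      = (1 - lam) ^ 2 * ((∑ b, Q x b) * (∑ a, Q a y) - Q x y) := by
  rw [sum_depolarizedCorrelation_row hQ hf, sum_depolarizedCorrelation_col hQ he,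
    depolarizedCorrelation, of_apply]
  ring

theorem sum_sqrt_max_rowSum_mul_colSum_sub_le_one (hQ0 : ∀ x y, 0 ≤ Q x y)
    (hQ : ∑ x, ∑ y, Q x y = 1) (φ : ι ≃ κ) :
    ∑ x, √(max 0 ((∑ b, Q x b) * (∑ a, Q a (φ x)) - Q x (φ x))) ≤ 1 := calc
  _ ≤ ∑ x, ((∑ b, Q x b) + (∑ a, Q a (φ x))) / 2 := Finset.sum_le_sum fun x _ =>
      sqrt_max_zero_mul_sub_le (Finset.sum_nonneg fun b _ => hQ0 x b)
        (Finset.sum_nonneg fun a _ => hQ0 a (φ x)) (hQ0 x (φ x))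
  _ = 1 := by
      rw [← Finset.sum_div, Finset.sum_add_distrib, φ.sum_comp (fun y => ∑ a, Q a y),
        Finset.sum_comm (γ := κ), hQ]
      norm_num

theorem sum_sqrt_max_rowSum_mul_colSum_sub_depolarizedCorrelation_le (hlam : lam ≤ 1)
    (hQ0 : ∀ x y, 0 ≤ Q x y) (hQ : ∑ x, ∑ y, Q x y = 1) (he : ∑ x, e x = 1)
    (hf : ∑ y, f y = 1) (φ : ι ≃ κ) :
    ∑ x, √(max 0 ((∑ b, depolarizedCorrelation lam Q e f x b)
      * (∑ a, depolarizedCorrelation lam Q e f a (φ x))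
      - depolarizedCorrelation lam Q e f x (φ x))) ≤ 1 - lam := by
  simp only [rowSum_mul_colSum_sub_depolarizedCorrelation hQ he hf,
    sqrt_max_zero_sq_mul (sub_nonneg.mpr hlam), ← Finset.mul_sum]
  exact mul_le_of_le_one_right (sub_nonneg.mpr hlam)
    (sum_sqrt_max_rowSum_mul_colSum_sub_le_one hQ0 hQ φ)

end DepolarizedCorrelation

section Depolarizing

variable {d n : ℕ}

theorem trace_noisyEffect_kronecker_noisyEffect_mul (lam : ℝ) (A B : Matrix (Fin d) (Fin d) ℂ)
    (σ : Matrix (Fin d × Fin d) (Fin d × Fin d) ℂ) :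
    ((noisyEffect lam A ⊗ₖ noisyEffect lam B) * σ).trace =
      (1 - lam) ^ 2 * ((A ⊗ₖ B) * σ).trace
        + (1 - lam) * lam * (((A ⊗ₖ 1) * σ).trace * (B.trace / d)
          + A.trace / d * ((1 ⊗ₖ B) * σ).trace)
        + lam ^ 2 * (A.trace / d * (B.trace / d)) * σ.trace := by
  simp only [noisyEffect, add_kronecker, kronecker_add, smul_kronecker, kronecker_smul, add_mul,
    smul_mul, trace_add, trace_smul, smul_eq_mul, one_kronecker_one, one_mul]
  push_cast
  ring

theorem GeneratesWithNoise.exists_eq_depolarizedCorrelation {P : Matrix (Fin n) (Fin n) ℝ}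
    {lam : ℝ} (h : GeneratesWithNoise P lam d) :
    ∃ (Q : Matrix (Fin n) (Fin n) ℝ) (e f : Fin n → ℝ), (∀ x y, 0 ≤ Q x y) ∧
      ∑ x, ∑ y, Q x y = 1 ∧ ∑ x, e x = 1 ∧ ∑ y, f y = 1 ∧
      P = depolarizedCorrelation lam Q e f := by
  obtain ⟨σ, E, F, hσ, hσ1, ⟨hE, hE1⟩, ⟨hF, hF1⟩, hP⟩ := h
  have hd : (d : ℂ) ≠ 0 := by
    rintro hd
    obtain rfl : d = 0 := by exact_mod_cast hd
    simp [trace] at hσ1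
  let Q : Matrix (Fin n) (Fin n) ℝ := of fun x y => ‖((E x ⊗ₖ F y) * σ).trace‖
  let e : Fin n → ℝ := fun x => ‖(E x).trace‖ / d
  let f : Fin n → ℝ := fun y => ‖(F y).trace‖ / d
  have hQ (x y) : (Q x y : ℂ) = ((E x ⊗ₖ F y) * σ).trace :=
    (Complex.eq_coe_norm_of_nonneg (((hE x).kronecker (hF y)).trace_mul_nonneg hσ)).symm
  have he (x) : (e x : ℂ) = (E x).trace / d := by
    simp only [e, Complex.ofReal_div, Complex.ofReal_natCast,
      ← Complex.eq_coe_norm_of_nonneg (hE x).trace_nonneg]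
  have hf (y) : (f y : ℂ) = (F y).trace / d := by
    simp only [f, Complex.ofReal_div, Complex.ofReal_natCast,
      ← Complex.eq_coe_norm_of_nonneg (hF y).trace_nonneg]
  have hrow (x) : ∑ y, (Q x y : ℂ) = ((E x ⊗ₖ 1) * σ).trace := by
    simp only [hQ, ← trace_sum, ← Finset.sum_mul, ← kronecker_sum, hF1]
  have hcol (y) : ∑ x, (Q x y : ℂ) = ((1 ⊗ₖ F y) * σ).trace := by
    simp only [hQ, ← trace_sum, ← Finset.sum_mul, ← sum_kronecker, hE1]
  refine ⟨Q, e, f, fun x y => norm_nonneg ((E x ⊗ₖ F y) * σ).trace, ?_, ?_, ?_, ?_⟩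
  · apply Complex.ofReal_injective
    simp only [Complex.ofReal_sum, hrow, ← trace_sum, ← Finset.sum_mul, ← sum_kronecker, hE1,
      one_kronecker_one, one_mul, hσ1, Complex.ofReal_one]
  · apply Complex.ofReal_injective
    simp only [Complex.ofReal_sum, he, ← Finset.sum_div, ← trace_sum, hE1, trace_one,
      Fintype.card_fin, div_self hd, Complex.ofReal_one]
  · apply Complex.ofReal_injective
    simp only [Complex.ofReal_sum, hf, ← Finset.sum_div, ← trace_sum, hF1, trace_one,
      Fintype.card_fin, div_self hd, Complex.ofReal_one]
  · ext x y
    apply Complex.ofReal_injective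
    rw [hP, trace_noisyEffect_kronecker_noisyEffect_mul, depolarizedCorrelation, of_apply]
    push_cast
    rw [hrow, hcol, hQ, he, hf, hσ1]
    ring

end Depolarizing

theorem noise_strength_upper_bound_of_reachable_general
    {n : ℕ} (P : Matrix (Fin n) (Fin n) ℝ)
    (lam : ℝ) (hlam1 : lam < 1)
    (d : ℕ) (hgen : GeneratesWithNoise P lam d) :
    ∀ φ : Equiv.Perm (Fin n),
      lam ≤ 1 - ∑ x, Real.sqrt
        (max 0 ((∑ b, P x b) * (∑ a, P a (φ x)) - P x (φ x))) := by
  intro φ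
  obtain ⟨Q, e, f, hQ0, hQ, he, hf, rfl⟩ := hgen.exists_eq_depolarizedCorrelation
  linarith [sum_sqrt_max_rowSum_mul_colSum_sub_depolarizedCorrelation_le hlam1.le hQ0 hQ he hf φ]

/-- a necessary condition on the noise strength λ for a correlation P
with strictly positive entries to be generated quantumly under depolarizing noise. -/
theorem noise_strength_upper_bound_of_reachable
    {n : ℕ} (P : Matrix (Fin n) (Fin n) ℝ)
    (hpos : ∀ x y, 0 < P x y) (hsum : ∑ x, ∑ y, P x y = 1)
    (lam : ℝ) (hlam0 : 0 ≤ lam) (hlam1 : lam < 1)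
    (d : ℕ) (hgen : GeneratesWithNoise P lam d) :
    ∀ φ : Equiv.Perm (Fin n),
      lam ≤ 1 - ∑ x, Real.sqrt
        (max 0 ((∑ b, P x b) * (∑ a, P a (φ x)) - P x (φ x))) :=
  noise_strength_upper_bound_of_reachable_general P lam hlam1 d hgen

end
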